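/- arXiv:1804.07223 — 5 statements merged into one kernel-verified Lean document; each statement's English description precedes it below -/
import Mathlib

section
/- Let p, φ, x be real numbers with 0 ≤ p ≤ 1 and 0 ≤ φ ≤ x ≤ 1. Then x·(1 − (p + (1−p)(1−φ))²) + (1−x)·(1−p)²φ² ≥ g_p(φ), where f_p(φ) = 2(1−p)²φ² − (1−p)(3−p)φ + 1 and g_p(φ) = φ(1 − f_p(φ)). -/
/-- The quadratic `f_p(φ) = 2(1−p)²φ² − (1−p)(3−p)φ + 1`. -/
def f (p φ : ℝ) : ℝ := 2 * (1 - p)^2 * φ^2 - (1 - p) * (3 - p) * φ + 1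

/-- `g_p(φ) = φ(1 − f_p(φ))`. -/
def g (p φ : ℝ) : ℝ := φ * (1 - f p φ)

theorem expectation_lower_bound (p φ x : ℝ) (hp0 : 0 ≤ p) (hp1 : p ≤ 1)
    (hφ0 : 0 ≤ φ) (hφx : φ ≤ x) (hx1 : x ≤ 1) :
    x * (1 - (p + (1 - p) * (1 - φ))^2) + (1 - x) * (1 - p)^2 * φ^2 ≥ g p φ := by
  have key : x * (1 - (p + (1 - p) * (1 - φ))^2) + (1 - x) * (1 - p)^2 * φ^2 - g p φ
      = 2 * ((1 - p) * φ) * (x - φ) * (1 - (1 - p) * φ) := by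
    simp only [g, f]; ring
  nlinarith [mul_nonneg (mul_nonneg (by nlinarith : (0:ℝ) ≤ 2 * ((1-p)*φ)) (by linarith : (0:ℝ) ≤ x - φ)) (by nlinarith : (0:ℝ) ≤ 1 - (1-p)*φ)]
end

section
/- Let p, φ, x be real numbers with 0 ≤ p ≤ 1 and 0 ≤ x ≤ φ ≤ 1. Then x·(1 − (p + (1−p)(1−φ))²) + (1−x)·(1−p)²φ² ≤ g_p(φ), where f_p(φ) = 2(1−p)²φ² − (1−p)(3−p)φ + 1 and g_p(φ) = φ(1 − f_p(φ)). -/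
theorem expectation_upper_bound (p φ x : ℝ) (hp0 : 0 ≤ p) (hp1 : p ≤ 1)
    (hx0 : 0 ≤ x) (hxφ : x ≤ φ) (hφ1 : φ ≤ 1) :
    x * (1 - (p + (1 - p) * (1 - φ))^2) + (1 - x) * (1 - p)^2 * φ^2 ≤ g p φ := by
  have hφ0 : 0 ≤ φ := le_trans hx0 hxφ
  have key : g p φ - (x * (1 - (p + (1 - p) * (1 - φ))^2) + (1 - x) * (1 - p)^2 * φ^2)
      = 2 * (φ - x) * (1 - p) * φ * (1 - (1 - p) * φ) := by
    simp only [g, f]; ring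
  have h1 : (1 - p) * φ ≤ 1 := by nlinarith
  nlinarith [mul_nonneg (mul_nonneg (mul_nonneg (sub_nonneg.2 hxφ) (sub_nonneg.2 hp1)) hφ0)
    (sub_nonneg.2 h1)]
end

section
/- Let 3 − 2√2 < p < 1, let f_p(φ) = 2(1−p)²φ² − (1−p)(3−p)φ + 1, g_p(φ) = φ(1 − f_p(φ)), φ̄_p = (3−p)/(4(1−p)), and set ε = f_p(φ̄_p). Then ε > 0 and for every φ with 0 ≤ φ ≤ 1 one has g_p(φ) ≤ φ·(1 − ε). -/
/-- The minimum point `φ̄_p = (3−p)/(4(1−p))` of `f_p`. -/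
noncomputable def phiBar (p : ℝ) : ℝ := (3 - p) / (4 * (1 - p))

theorem g_contraction (p : ℝ) (hp : 3 - 2 * Real.sqrt 2 < p) (hp1 : p < 1) :
    f p (phiBar p) > 0 ∧
    ∀ φ : ℝ, 0 ≤ φ → φ ≤ 1 → g p φ ≤ φ * (1 - f p (phiBar p)) := by
  have ha : (0:ℝ) < 1 - p := by linarith
  have hs : Real.sqrt 2 ^ 2 = 2 := Real.sq_sqrt (by norm_num)
  have hfbar : f p (phiBar p) = 1 - (3 - p)^2 / 8 := by
    unfold f phiBar
    field_simp
    ring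
  constructor
  · rw [hfbar]
    nlinarith [Real.sqrt_nonneg 2, hs, hp, hp1]
  · intro φ hφ0 hφ1
    have key : f p (phiBar p) ≤ f p φ := by
      have h : f p φ - f p (phiBar p) = 2 * (1 - p)^2 * (φ - phiBar p)^2 := by
        unfold f phiBar
        field_simp
        ring
      nlinarith [sq_nonneg (φ - phiBar p)]
    unfold g
    nlinarith
end

section
/- Let 0 ≤ p < 3 − 2√2, let f_p(φ) = 2(1−p)²φ² − (1−p)(3−p)φ + 1, g_p(φ) = φ(1 − f_p(φ)), φ̄_p = (3−p)/(4(1−p)), and set ε = −f_p(φ̄_p). Then ε > 0 and for every φ with φ̄_p ≤ φ ≤ 1 one has g_p(φ) ≥ φ̄_p·(1 + ε). -/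
theorem g_expansion (p : ℝ) (hp0 : 0 ≤ p) (hp : p < 3 - 2 * Real.sqrt 2) :
    -f p (phiBar p) > 0 ∧
    ∀ φ : ℝ, phiBar p ≤ φ → φ ≤ 1 → g p φ ≥ phiBar p * (1 + -f p (phiBar p)) := by
  have hs2 : (Real.sqrt 2) ^ 2 = 2 := Real.sq_sqrt (by norm_num)
  have hs1 : (1:ℝ) < Real.sqrt 2 := by nlinarith [Real.sqrt_nonneg 2]
  have ha : (0:ℝ) < 1 - p := by nlinarith
  set b := phiBar p with hbdef
  have hb : 4 * (1 - p) * b = 3 - p := by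
    rw [hbdef, phiBar]; field_simp
  have hb34 : (3:ℝ)/4 ≤ b := by
    rw [hbdef, phiBar]
    rw [div_le_div_iff₀ (by norm_num) (by linarith)]
    nlinarith
  have hfb : f p b = 1 - (3 - p)^2 / 8 := by
    rw [f]
    have h8 : (3 - p)^2 = (4 * (1-p) * b)^2 := by rw [hb]
    have hlin : (1 - p) * (3 - p) * b = 4 * (1-p)^2 * b^2 := by
      nlinarith [hb]
    nlinarith [hlin, h8]
  have heps : -f p b > 0 := by
    rw [hfb]
    have : 2 * Real.sqrt 2 < 3 - p := by linarith
    nlinarith [Real.sqrt_nonneg 2]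
  refine ⟨heps, fun φ hφ1 hφ2 => ?_⟩
  have hrhs : b * (1 + -f p b) = g p b := by rw [g]; ring
  rw [hrhs, g, g, f, f, ← hb]
  have hpos : b^2 + b*φ - φ^2 ≥ 0 := by nlinarith
  nlinarith [mul_nonneg (mul_nonneg (mul_pos ha ha).le (sub_nonneg.2 hφ1)) hpos]
end

section
/- Let G be a finite simple graph with vertex set V in which every vertex has positive degree, let 0 ≤ p ≤ 1, and let the vertices be partitioned into blue vertices B and red vertices R = V \ B. For each vertex w define φ_w = |N(w) ∩ R| / deg(w), and define q_w = 1 − (p + (1−p)(1−φ_w))² if w ∈ R and q_w = (1−p)²·φ_w² if w ∈ B. Let φ_min = min_{w ∈ V} φ_w and φ_max = max_{w ∈ V} φ_w. Then for every vertex v: g_p(φ_min) ≤ (1/deg(v)) · Σ_{w ∈ N(v)} q_w ≤ g_p(φ_max), where f_p(φ) = 2(1−p)²φ² − (1−p)(3−p)φ + 1 and g_p(φ) = φ(1 − f_p(φ)). -/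
set_option maxHeartbeats 1000000 in
theorem expected_red_fraction_bounds {V : Type*} [Fintype V] [DecidableEq V]
    [Nonempty V]
    (G : SimpleGraph V) [DecidableRel G.Adj] (B : Finset V) (p : ℝ)
    (hp0 : 0 ≤ p) (hp1 : p ≤ 1)
    (hdeg : ∀ v : V, 0 < G.degree v)
    (φ : V → ℝ) (hφ : ∀ w : V, φ w = ((G.neighborFinset w ∩ Bᶜ).card : ℝ) / (G.degree w : ℝ))
    (q : V → ℝ)
    (hq : ∀ w : V, q w = if w ∈ B then (1 - p)^2 * (φ w)^2
                         else 1 - (p + (1 - p) * (1 - φ w))^2) :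
    ∀ v : V,
      g p (Finset.univ.inf' Finset.univ_nonempty φ) ≤
          (1 / (G.degree v : ℝ)) * ∑ w ∈ G.neighborFinset v, q w ∧
      (1 / (G.degree v : ℝ)) * ∑ w ∈ G.neighborFinset v, q w ≤
          g p (Finset.univ.sup' Finset.univ_nonempty φ) := by
  intro v
  set m := Finset.univ.inf' Finset.univ_nonempty φ with hmdef
  set M := Finset.univ.sup' Finset.univ_nonempty φ with hMdef
  have hdv : (0:ℝ) < (G.degree v : ℝ) := by exact_mod_cast hdeg v
  set d : ℝ := (G.degree v : ℝ) with hddef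
  set s := G.neighborFinset v with hsdef
  have hφ0 : ∀ w, 0 ≤ φ w := by
    intro w; rw [hφ]; positivity
  have hφ1 : ∀ w, φ w ≤ 1 := by
    intro w
    have hdw : (0:ℝ) < (G.degree w : ℝ) := by exact_mod_cast hdeg w
    rw [hφ, div_le_one hdw]
    have h : (G.neighborFinset w ∩ Bᶜ).card ≤ (G.neighborFinset w).card :=
      Finset.card_le_card Finset.inter_subset_left
    rw [G.card_neighborFinset_eq_degree] at h
    exact_mod_cast h
  have hm0 : 0 ≤ m := Finset.le_inf' _ _ (fun w _ => hφ0 w)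
  have hM1 : M ≤ 1 := Finset.sup'_le _ _ (fun w _ => hφ1 w)
  have hmv : m ≤ φ v := Finset.inf'_le _ (Finset.mem_univ v)
  have hMv : φ v ≤ M := Finset.le_sup' _ (Finset.mem_univ v)
  have hm1 : m ≤ 1 := le_trans hmv (hφ1 v)
  have hM0 : 0 ≤ M := le_trans (hφ0 v) hMv
  set b : ℕ := (s ∩ B).card with hbdef
  set r : ℕ := (s ∩ Bᶜ).card with hrdef
  have hcard : (b:ℝ) + r = d := by
    have hsdB : s \ B = s ∩ Bᶜ := by ext x; simp
    have h := Finset.card_inter_add_card_sdiff s B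
    rw [hsdB] at h
    have : b + r = G.degree v := by
      rw [hbdef, hrdef, ← G.card_neighborFinset_eq_degree, ← hsdef]
      exact h
    rw [hddef]
    exact_mod_cast this
  have hr : (r:ℝ) = φ v * d := by
    rw [hφ v, ← hsdef, ← hrdef, ← hddef]
    field_simp
  have hsplit : ∀ cB cR : ℝ, ∑ w ∈ s, (if w ∈ B then cB else cR) = b * cB + r * cR := by
    intro cB cR
    rw [Finset.sum_ite, Finset.sum_const, Finset.sum_const, Finset.filter_mem_eq_inter,
        Finset.filter_not, Finset.filter_mem_eq_inter, Finset.sdiff_inter_self_left,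
        (by ext x; simp : s \ B = s ∩ Bᶜ)]
    push_cast [nsmul_eq_mul]
    ring
  -- the key algebraic identity: d * g p x - ((d - r)*qB x + r*qR x) = (x*d - r)*(qR x - qB x)
  have hqd : ∀ x : ℝ, 0 ≤ x → x ≤ 1 →
      (1-p)^2 * x^2 ≤ 1 - (p + (1-p)*(1-x))^2 := by
    intro x hx0 hx1
    nlinarith [mul_nonneg (mul_nonneg (by linarith : (0:ℝ) ≤ 1-p) hx0)
      (by nlinarith : (0:ℝ) ≤ 1 - (1-p)*x)]
  constructor
  · -- lower bound
    have hsumL : (b:ℝ) * ((1-p)^2*m^2) + r * (1 - (p+(1-p)*(1-m))^2) ≤ ∑ w ∈ s, q w := by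
      rw [← hsplit]
      apply Finset.sum_le_sum
      intro w _
      have hwm : m ≤ φ w := Finset.inf'_le _ (Finset.mem_univ w)
      have hw0 : 0 ≤ φ w := hφ0 w
      have hw1 : φ w ≤ 1 := hφ1 w
      rw [hq]
      split_ifs
      · nlinarith [mul_nonneg (mul_nonneg (sq_nonneg (1-p)) (by linarith : (0:ℝ) ≤ φ w - m))
          (by linarith : (0:ℝ) ≤ φ w + m)]
      · have hA : 0 ≤ p + (1-p)*(1-φ w) := by nlinarith
        have hB : p + (1-p)*(1-φ w) ≤ p + (1-p)*(1-m) := by nlinarith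
        have := pow_le_pow_left₀ hA hB 2
        linarith
    have hkey : d * g p m ≤ (b:ℝ) * ((1-p)^2*m^2) + r * (1 - (p+(1-p)*(1-m))^2) := by
      have h3 : m * d ≤ (r:ℝ) := by rw [hr]; nlinarith
      have hb : (b:ℝ) = d - r := by linarith
      have hqd' := hqd m hm0 hm1
      rw [hb, g, f]
      nlinarith [mul_nonneg (by linarith : (0:ℝ) ≤ (r:ℝ) - m*d) (by linarith : (0:ℝ) ≤ (1 - (p+(1-p)*(1-m))^2) - (1-p)^2*m^2)]
    rw [one_div_mul_eq_div, le_div_iff₀ hdv]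
    nlinarith [hsumL, hkey]
  · -- upper bound
    have hsumU : ∑ w ∈ s, q w ≤ (b:ℝ) * ((1-p)^2*M^2) + r * (1 - (p+(1-p)*(1-M))^2) := by
      rw [← hsplit]
      apply Finset.sum_le_sum
      intro w _
      have hwM : φ w ≤ M := Finset.le_sup' _ (Finset.mem_univ w)
      have hw0 : 0 ≤ φ w := hφ0 w
      have hw1 : φ w ≤ 1 := hφ1 w
      rw [hq]
      split_ifs
      · nlinarith [mul_nonneg (mul_nonneg (sq_nonneg (1-p)) (by linarith : (0:ℝ) ≤ M - φ w))
          (by linarith : (0:ℝ) ≤ M + φ w)]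
      · have hA : 0 ≤ p + (1-p)*(1-M) := by nlinarith
        have hB : p + (1-p)*(1-M) ≤ p + (1-p)*(1-φ w) := by nlinarith
        have := pow_le_pow_left₀ hA hB 2
        linarith
    have hkey : (b:ℝ) * ((1-p)^2*M^2) + r * (1 - (p+(1-p)*(1-M))^2) ≤ d * g p M := by
      have h3 : (r:ℝ) ≤ M * d := by rw [hr]; nlinarith
      have hb : (b:ℝ) = d - r := by linarith
      have hqd' := hqd M hM0 hM1
      rw [hb, g, f]
      nlinarith [mul_nonneg (by linarith : (0:ℝ) ≤ M*d - (r:ℝ)) (by linarith : (0:ℝ) ≤ (1 - (p+(1-p)*(1-M))^2) - (1-p)^2*M^2)]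
    rw [one_div_mul_eq_div, div_le_iff₀ hdv]
    nlinarith [hsumU, hkey]
end
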